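/- arXiv:2003.04438 — 6 statements merged into one kernel-verified Lean document; each statement's English description precedes it below -/
import Mathlib

section
/- Given an uncapacitated facility location (UFL) instance and a feasible UFL solution consisting of an open set S' ⊆ S and an assignment a : C → S with a l ∈ S' for every client l, whose cost is K'', the UMPLS instance constructed from the UFL instance admits a feasible solution whose cost equals K''. Concretely, the solution sets y = 1 and x j = (number of clients assigned to j) at each facility plant j ∈ S', sets w (facility j) (client l) = 1 and Y (facility j) (client l) = 1 for each client l with a l = j, and sets all other variables to zero. -/
open Finset

noncomputable section

/-- Plants of the UMPLS instance built from a UFL instance: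
one plant per facility (`Sum.inl`) and one per client (`Sum.inr`). -/
abbrev Plant (NS NC : ℕ) := Fin NS ⊕ Fin NC

/-- Feasibility of a single-item single-period UMPLS solution. -/
def umplsFeasible {P : Type} [Fintype P] [DecidableEq P]
    (d : P → ℝ) (x s : P → ℝ) (w : P → P → ℝ) (y : P → ℝ) (Y : P → P → ℝ) : Prop :=
  (∀ p, 0 ≤ x p) ∧ (∀ p, 0 ≤ s p) ∧ (∀ p l, 0 ≤ w p l) ∧
  (∀ p, w p p = 0) ∧
  (∀ p, x p + ∑ l ∈ univ.erase p, w l p = s p + ∑ l ∈ univ.erase p, w p l + d p) ∧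
  (∀ p, y p = 0 ∨ y p = 1) ∧
  (∀ p l, Y p l = 0 ∨ Y p l = 1) ∧
  (∀ p, 0 < x p → y p = 1) ∧
  (∀ p l, 0 < w p l → Y p l = 1)

/-- Cost of a single-item single-period UMPLS solution. -/
def umplsCost {P : Type} [Fintype P] [DecidableEq P]
    (c f h : P → ℝ) (r F : P → P → ℝ)
    (x s : P → ℝ) (w : P → P → ℝ) (y : P → ℝ) (Y : P → P → ℝ) : ℝ :=
  (∑ p, (c p * x p + f p * y p + h p * s p))
    + ∑ p, ∑ l ∈ univ.erase p, (r p l * w p l + F p l * Y p l)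

/-- `Ω = (max_j q j + max_{l,j} v l j) * (NC + 1)`. -/
def Omega (NS NC : ℕ) (q : Fin NS → ℝ) (v : Fin NC → Fin NS → ℝ) : ℝ :=
  ((⨆ j, q j) + (⨆ l, ⨆ j, v l j)) * (NC + 1)

/-- Demands of the constructed UMPLS instance. -/
def redD (NS NC : ℕ) : Plant NS NC → ℝ
  | Sum.inl _ => 0
  | Sum.inr _ => 1

/-- Setup costs of the constructed UMPLS instance. -/
def redF (NS NC : ℕ) (q : Fin NS → ℝ) (v : Fin NC → Fin NS → ℝ) : Plant NS NC → ℝ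
  | Sum.inl j => q j
  | Sum.inr _ => Omega NS NC q v

/-- Unit production costs of the constructed UMPLS instance. -/
def redC (NS NC : ℕ) (q : Fin NS → ℝ) (v : Fin NC → Fin NS → ℝ) : Plant NS NC → ℝ
  | Sum.inl _ => 0
  | Sum.inr _ => Omega NS NC q v

/-- Holding costs of the constructed UMPLS instance. -/
def redH (NS NC : ℕ) : Plant NS NC → ℝ := fun _ => 0

/-- Unit transfer costs of the constructed UMPLS instance:
`v l j` on facility→client arcs and `Ω` on every other ordered pair of distinct plants. -/
def redR (NS NC : ℕ) (q : Fin NS → ℝ) (v : Fin NC → Fin NS → ℝ) :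
    Plant NS NC → Plant NS NC → ℝ
  | Sum.inl j, Sum.inr l => v l j
  | _, _ => Omega NS NC q v

/-- Fixed transfer costs of the constructed UMPLS instance (all zero). -/
def redFix (NS NC : ℕ) : Plant NS NC → Plant NS NC → ℝ := fun _ _ => 0

/-- Cost of a UFL solution given by the open set `S'` and the assignment `a`. -/
def uflCost (NS NC : ℕ) (q : Fin NS → ℝ) (v : Fin NC → Fin NS → ℝ)
    (S' : Finset (Fin NS)) (a : Fin NC → Fin NS) : ℝ :=
  ∑ j ∈ S', q j + ∑ l, v l (a l)

/-- Production of the concrete UMPLS solution built from a UFL solution `(S', a)`: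
`x (facility j) = ` number of clients assigned to `j` for `j ∈ S'`, all else zero. -/
def solX (NS NC : ℕ) (S' : Finset (Fin NS)) (a : Fin NC → Fin NS) : Plant NS NC → ℝ
  | Sum.inl j => if j ∈ S' then (((univ.filter fun l => a l = j)).card : ℝ) else 0
  | Sum.inr _ => 0

/-- Transfers of the concrete UMPLS solution: `w (facility j) (client l) = 1` iff `a l = j`. -/
def solW (NS NC : ℕ) (a : Fin NC → Fin NS) : Plant NS NC → Plant NS NC → ℝ
  | Sum.inl j, Sum.inr l => if a l = j then 1 else 0
  | _, _ => 0

/-- Production setup indicators of the concrete UMPLS solution: `y (facility j) = 1` iff `j ∈ S'`. -/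
def solY (NS NC : ℕ) (S' : Finset (Fin NS)) : Plant NS NC → ℝ
  | Sum.inl j => if j ∈ S' then 1 else 0
  | Sum.inr _ => 0

/-- Transfer setup indicators: `Y (facility j) (client l) = 1` iff `a l = j`. -/
def solYY (NS NC : ℕ) (a : Fin NC → Fin NS) : Plant NS NC → Plant NS NC → ℝ
  | Sum.inl j, Sum.inr l => if a l = j then 1 else 0
  | _, _ => 0

/-- the UMPLS solution constructed from a feasible UFL solution of cost `K''`
is feasible for the constructed UMPLS instance and has cost exactly `K''`. -/
theorem stmt_0 (NS NC : ℕ) (q : Fin NS → ℝ) (v : Fin NC → Fin NS → ℝ)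
    (hq : ∀ j, 0 ≤ q j) (hv : ∀ l j, 0 ≤ v l j)
    (S' : Finset (Fin NS)) (a : Fin NC → Fin NS) (ha : ∀ l, a l ∈ S')
    (K'' : ℝ) (hK : uflCost NS NC q v S' a = K'') :
    umplsFeasible (redD NS NC)
        (solX NS NC S' a) (fun _ => 0) (solW NS NC a) (solY NS NC S') (solYY NS NC a) ∧
      umplsCost (redC NS NC q v) (redF NS NC q v) (redH NS NC)
        (redR NS NC q v) (redFix NS NC)
        (solX NS NC S' a) (fun _ => 0) (solW NS NC a) (solY NS NC S') (solYY NS NC a) = K'' := by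
  
  constructor
  · refine ⟨?_, ?_, ?_, ?_, ?_, ?_, ?_, ?_, ?_⟩
    · rintro (j|l)
      · simp only [solX]; split_ifs <;> positivity
      · simp [solX]
    · intro p; simp
    · rintro (j|l) (j'|l') <;> simp only [solW] <;>
        first | positivity | (split_ifs <;> norm_num)
    · rintro (j|l) <;> simp [solW]
    · rintro (j|l)
      · rw [Finset.sum_erase _ (by simp [solW]), Finset.sum_erase _ (by simp [solW]),
          Fintype.sum_sum_type, Fintype.sum_sum_type]
        simp only [solX, solW, redD, Finset.sum_const_zero, add_zero, zero_add]
        rw [Finset.sum_boole]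
        by_cases hj : j ∈ S'
        · simp [hj]
        · have : (univ.filter fun l => a l = j) = ∅ := by
            ext l; simp; intro h; exact hj (h ▸ ha l)
          simp [hj, this]
      · rw [Finset.sum_erase _ (by simp [solW]), Finset.sum_erase _ (by simp [solW]),
          Fintype.sum_sum_type, Fintype.sum_sum_type]
        simp [solX, solW, redD, Finset.sum_ite_eq' univ (a l)]
    · rintro (j|l) <;> simp only [solY]
      · split_ifs <;> simp
      · simp
    · rintro (j|l) (j'|l') <;> simp [solYY] <;> tauto
    · rintro (j|l) h
      · simp only [solX] at h
        simp only [solY]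
        split_ifs at h ⊢ with hj
        · rfl
        · exact absurd h (lt_irrefl 0)
      · simp [solX] at h
    · rintro (j|l) (j'|l') h <;> simp only [solW] at h <;>
        first
          | exact absurd h (lt_irrefl 0)
          | (simp only [solYY]; split_ifs at h ⊢ with hh
             · rfl
             · norm_num at h)
  · rw [← hK]
    unfold umplsCost uflCost
    have h2 : ∀ p : Plant NS NC,
        (∑ l ∈ univ.erase p, (redR NS NC q v p l * solW NS NC a p l
          + redFix NS NC p l * solYY NS NC a p l))
        = ∑ l : Plant NS NC, redR NS NC q v p l * solW NS NC a p l := by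
      intro p
      have hz : ∀ l, redFix NS NC p l * solYY NS NC a p l = 0 := fun l => by
        simp [redFix]
      simp only [hz, add_zero]
      exact Finset.sum_erase univ (f := fun l => redR NS NC q v p l * solW NS NC a p l)
        (by cases p <;> simp [solW])
    rw [Finset.sum_congr rfl (fun p _ => h2 p)]
    rw [Fintype.sum_sum_type, Fintype.sum_sum_type]
    simp only [redC, redF, redH, solX, solY, Fintype.sum_sum_type, redR, solW,
      mul_zero, zero_mul, mul_one, add_zero, zero_add, Finset.sum_const_zero, mul_ite]
    congr 1
    · simp [Finset.sum_ite_mem]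
    · rw [Finset.sum_comm]
      refine Finset.sum_congr rfl fun l _ => ?_
      rw [Finset.sum_ite_eq univ (a l) (fun j => v l j)]
      simp
end
end

section
/- In the UMPLS instance constructed from a UFL instance, if there exists a feasible solution with cost K < Ω, then there exists a feasible solution with cost at most K in which w p l = 0 for every ordered pair (p, l) that is not of the form (facility plant, client plant); that is, all transfers occur only on facility→client arcs. -/
open Finset

noncomputable section

/-! Write the cost as `∑_{j open} q j + ∑ v l j * w j l + Ω * U`, where `U` is everything charged
at rate `Ω`; since the cost is below `Ω`, `U < 1`. A client `l` receives at least `1 - D l`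
directly from open facilities, where `D l` collects its own production, its inflow from other
clients, and its inflow from closed facilities; a closed facility produces nothing, so it only
forwards what reached it over `Ω`-arcs, whence `∑ D l ≤ U`. In particular every client is reached
by an open facility, and since `v ≤ Ω`, serving `l` from its cheapest open facility costs at most
`∑_{j open} v l j * w j l + Ω * D l`. This UFL solution, embedded back as unit flows on
facility→client arcs, therefore costs at most the original one. -/

section

variable {NS NC : ℕ} {q : Fin NS → ℝ} {v : Fin NC → Fin NS → ℝ}

lemma Omega_nonneg (hq : ∀ j, 0 ≤ q j) (hv : ∀ l j, 0 ≤ v l j) : 0 ≤ Omega NS NC q v := by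
  have := Real.iSup_nonneg hq
  have := Real.iSup_nonneg fun l => Real.iSup_nonneg (hv l)
  unfold Omega
  positivity

lemma le_Omega (hq : ∀ j, 0 ≤ q j) (hv : ∀ l j, 0 ≤ v l j) (l : Fin NC) (j : Fin NS) :
    v l j ≤ Omega NS NC q v := by
  have hvl : v l j ≤ ⨆ l, ⨆ j, v l j :=
    (le_ciSup (Finite.bddAbove_range _) j).trans
      (le_ciSup (f := fun l => ⨆ j, v l j) (Finite.bddAbove_range _) l)
  have := Real.iSup_nonneg hq
  have := (hv l j).trans hvl
  unfold Omega
  nlinarith [(Nat.cast_nonneg NC : (0 : ℝ) ≤ NC)]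

def omegaUnits (x y : Plant NS NC → ℝ) (w : Plant NS NC → Plant NS NC → ℝ) : ℝ :=
  ∑ l, (x (.inr l) + y (.inr l)) + ∑ j, ∑ j', w (.inl j) (.inl j') + ∑ l, ∑ m, w (.inr l) m

lemma umplsCost_red_eq {x s y : Plant NS NC → ℝ} {w Y : Plant NS NC → Plant NS NC → ℝ}
    (hw : ∀ p, w p p = 0) :
    umplsCost (redC NS NC q v) (redF NS NC q v) (redH NS NC) (redR NS NC q v) (redFix NS NC)
        x s w y Y =
      ∑ j, q j * y (.inl j) + ∑ l, ∑ j, v l j * w (.inl j) (.inr l)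
        + Omega NS NC q v * omegaUnits x y w := by
  have herase : ∀ p, ∑ m ∈ univ.erase p, (redR NS NC q v p m * w p m + redFix NS NC p m * Y p m)
      = ∑ m, redR NS NC q v p m * w p m := fun p => by
    simp only [redFix, zero_mul, add_zero]
    exact sum_erase _ (by rw [hw, mul_zero])
  rw [umplsCost, sum_congr rfl fun p _ => herase p]
  simp only [Fintype.sum_sum_type, redC, redF, redH, redR, omegaUnits,
    mul_add, mul_sum, sum_add_distrib, zero_mul, add_zero, sum_const_zero, zero_add]
  rw [sum_comm (s := univ (α := Fin NS)) (t := univ (α := Fin NC))]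
  ring

section Feasible

variable {x s y : Plant NS NC → ℝ} {w Y : Plant NS NC → Plant NS NC → ℝ}

lemma balance_sum_type (hf : umplsFeasible (redD NS NC) x s w y Y) (p : Plant NS NC) :
    x p + ∑ j, w (.inl j) p + ∑ l, w (.inr l) p
      = s p + ∑ j, w p (.inl j) + ∑ l, w p (.inr l) + redD NS NC p := by
  obtain ⟨-, -, -, hdiag, hbal, -⟩ := hf
  have h := hbal p
  rw [sum_erase univ (f := fun m => w m p) (hdiag p), sum_erase univ (f := w p) (hdiag p),
    Fintype.sum_sum_type, Fintype.sum_sum_type] at h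
  linarith

def openFacilities (y : Plant NS NC → ℝ) : Finset (Fin NS) :=
  univ.filter fun j => y (.inl j) = 1

def indirectSupply (x y : Plant NS NC → ℝ) (w : Plant NS NC → Plant NS NC → ℝ) (l : Fin NC) : ℝ :=
  x (.inr l) + ∑ j ∈ (openFacilities y)ᶜ, w (.inl j) (.inr l) + ∑ l', w (.inr l') (.inr l)

lemma indirectSupply_nonneg (hf : umplsFeasible (redD NS NC) x s w y Y) (l : Fin NC) :
    0 ≤ indirectSupply x y w l := by
  obtain ⟨hx, -, hw, -⟩ := hf
  unfold indirectSupply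
  have := sum_nonneg fun j (_ : j ∈ (openFacilities y)ᶜ) => hw (.inl j) (.inr l)
  have := sum_nonneg fun l' (_ : l' ∈ univ) => hw (.inr l') (.inr l)
  linarith [hx (.inr l)]

lemma one_le_sum_openFacilities_add_indirectSupply
    (hf : umplsFeasible (redD NS NC) x s w y Y) (l : Fin NC) :
    1 ≤ ∑ j ∈ openFacilities y, w (.inl j) (.inr l) + indirectSupply x y w l := by
  have hb := balance_sum_type hf (.inr l)
  obtain ⟨-, hs, hw, -⟩ := hf
  have := sum_nonneg fun j (_ : j ∈ univ) => hw (.inr l) (.inl j)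
  have := sum_nonneg fun l' (_ : l' ∈ univ) => hw (.inr l) (.inr l')
  rw [← sum_add_sum_compl (openFacilities y)] at hb
  simp only [indirectSupply, redD] at hb ⊢
  linarith [hs (.inr l)]

lemma sum_inr_le_sum_inflow_of_notMem_openFacilities
    (hf : umplsFeasible (redD NS NC) x s w y Y) {j : Fin NS} (hj : j ∉ openFacilities y) :
    ∑ l, w (.inl j) (.inr l) ≤ ∑ j', w (.inl j') (.inl j) + ∑ l, w (.inr l) (.inl j) := by
  have hb := balance_sum_type hf (.inl j)
  obtain ⟨hx, hs, hw, -, -, -, -, hxy, -⟩ := hf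
  have hx0 : x (.inl j) = 0 :=
    le_antisymm (not_lt.1 fun h => hj (by simpa [openFacilities] using hxy _ h)) (hx _)
  have := sum_nonneg fun j' (_ : j' ∈ univ) => hw (.inl j) (.inl j')
  simp only [redD] at hb
  linarith [hs (.inl j)]

lemma sum_indirectSupply_le_omegaUnits (hf : umplsFeasible (redD NS NC) x s w y Y) :
    ∑ l, indirectSupply x y w l ≤ omegaUnits x y w := by
  have hfac := fun j => sum_inr_le_sum_inflow_of_notMem_openFacilities (j := j) hf
  obtain ⟨hx, -, hw, -, -, hy, -⟩ := hf
  have hclosed : ∑ l, ∑ j ∈ (openFacilities y)ᶜ, w (.inl j) (.inr l)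
      ≤ ∑ j, ∑ j', w (.inl j') (.inl j) + ∑ j, ∑ l, w (.inr l) (.inl j) := by
    rw [sum_comm, ← sum_add_distrib]
    calc ∑ j ∈ (openFacilities y)ᶜ, ∑ l, w (.inl j) (.inr l)
        ≤ ∑ j ∈ (openFacilities y)ᶜ, (∑ j', w (.inl j') (.inl j) + ∑ l, w (.inr l) (.inl j)) :=
          sum_le_sum fun j hj => hfac j (mem_compl.1 hj)
      _ ≤ _ := sum_le_sum_of_subset_of_nonneg (subset_univ _) fun j _ _ =>
          add_nonneg (sum_nonneg fun _ _ => hw _ _) (sum_nonneg fun _ _ => hw _ _)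
  have hy0 : ∀ l : Fin NC, 0 ≤ y (.inr l) := fun l => by rcases hy (.inr l) with h | h <;> simp [h]
  have := sum_nonneg fun l (_ : l ∈ univ) => hy0 l
  simp only [indirectSupply, omegaUnits, sum_add_distrib, Fintype.sum_sum_type] at hclosed ⊢
  rw [sum_comm (s := univ (α := Fin NS)) (t := univ (α := Fin NS)),
    sum_comm (s := univ (α := Fin NS)) (t := univ (α := Fin NC))] at hclosed
  rw [sum_comm (s := univ (α := Fin NC)) (t := univ (α := Fin NC))]
  linarith

end Feasible

lemma le_sum_mul_add_mul_of_one_le {ι : Type*} {O : Finset ι} {c w : ι → ℝ} {m D Ω : ℝ}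
    (hmc : ∀ j ∈ O, m ≤ c j) (hm : 0 ≤ m) (hmΩ : m ≤ Ω) (hw : ∀ j ∈ O, 0 ≤ w j) (hD : 0 ≤ D)
    (hcover : 1 ≤ ∑ j ∈ O, w j + D) :
    m ≤ ∑ j ∈ O, c j * w j + Ω * D :=
  calc m ≤ m * (∑ j ∈ O, w j + D) := le_mul_of_one_le_right hm hcover
    _ = ∑ j ∈ O, m * w j + m * D := by rw [mul_add, mul_sum]
    _ ≤ ∑ j ∈ O, c j * w j + Ω * D := by
      gcongr with j hj
      · exact hw j hj
      · exact hmc j hj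

lemma sum_mul_eq_sum_openFacilities {y : Plant NS NC → ℝ} (hy : ∀ p, y p = 0 ∨ y p = 1) :
    ∑ j, q j * y (.inl j) = ∑ j ∈ openFacilities y, q j := by
  rw [openFacilities, sum_filter]
  refine sum_congr rfl fun j _ => ?_
  rcases hy (.inl j) with h | h <;> simp [h]

lemma omegaUnits_lt_one (hq : ∀ j, 0 ≤ q j) (hv : ∀ l j, 0 ≤ v l j)
    {x s y : Plant NS NC → ℝ} {w Y : Plant NS NC → Plant NS NC → ℝ}
    (hf : umplsFeasible (redD NS NC) x s w y Y)
    (hK : umplsCost (redC NS NC q v) (redF NS NC q v) (redH NS NC) (redR NS NC q v)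
      (redFix NS NC) x s w y Y < Omega NS NC q v) :
    omegaUnits x y w < 1 := by
  obtain ⟨-, -, hw, hdiag, -, hy, -⟩ := hf
  rw [umplsCost_red_eq hdiag, sum_mul_eq_sum_openFacilities hy] at hK
  have := Omega_nonneg hq hv
  have := sum_nonneg fun j (_ : j ∈ openFacilities y) => hq j
  have : 0 ≤ ∑ l, ∑ j, v l j * w (.inl j) (.inr l) :=
    sum_nonneg fun l _ => sum_nonneg fun j _ => mul_nonneg (hv l j) (hw _ _)
  by_contra! h
  nlinarith

theorem exists_uflCost_le_umplsCost (hq : ∀ j, 0 ≤ q j) (hv : ∀ l j, 0 ≤ v l j)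
    {x s y : Plant NS NC → ℝ} {w Y : Plant NS NC → Plant NS NC → ℝ}
    (hf : umplsFeasible (redD NS NC) x s w y Y)
    (hK : umplsCost (redC NS NC q v) (redF NS NC q v) (redH NS NC) (redR NS NC q v)
      (redFix NS NC) x s w y Y < Omega NS NC q v) :
    ∃ (O : Finset (Fin NS)) (a : Fin NC → Fin NS), (∀ l, a l ∈ O) ∧
      uflCost NS NC q v O a ≤ umplsCost (redC NS NC q v) (redF NS NC q v) (redH NS NC)
        (redR NS NC q v) (redFix NS NC) x s w y Y := by
  have hD0 := indirectSupply_nonneg hf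
  have hDU := sum_indirectSupply_le_omegaUnits hf
  have hcover := one_le_sum_openFacilities_add_indirectSupply hf
  have hU1 := omegaUnits_lt_one hq hv hf hK
  obtain ⟨-, -, hw, hdiag, -, hy, -⟩ := hf
  rw [umplsCost_red_eq hdiag, sum_mul_eq_sum_openFacilities hy]
  set O := openFacilities y
  set Ω := Omega NS NC q v
  set D := indirectSupply x y w
  have hΩ := Omega_nonneg hq hv
  have hO : ∀ l : Fin NC, O.Nonempty := fun l => by
    by_contra hO
    have h := hcover l
    rw [not_nonempty_iff_eq_empty.1 hO, sum_empty, zero_add] at h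
    linarith [single_le_sum (fun l _ => hD0 l) (mem_univ l)]
  choose a haO hamin using fun l => exists_min_image O (v l) (hO l)
  refine ⟨O, a, haO, ?_⟩
  have hclient : ∀ l, v l (a l) ≤ ∑ j ∈ O, v l j * w (.inl j) (.inr l) + Ω * D l := fun l =>
    le_sum_mul_add_mul_of_one_le (hamin l) (hv _ _) (le_Omega hq hv _ _)
      (fun j _ => hw _ _) (hD0 l) (hcover l)
  have hopen : ∀ l, ∑ j ∈ O, v l j * w (.inl j) (.inr l) ≤ ∑ j, v l j * w (.inl j) (.inr l) :=
    fun l => sum_le_sum_of_subset_of_nonneg (subset_univ _) fun j _ _ =>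
      mul_nonneg (hv l j) (hw _ _)
  calc uflCost NS NC q v O a
      ≤ ∑ j ∈ O, q j + ∑ l, (∑ j, v l j * w (.inl j) (.inr l) + Ω * D l) := by
        unfold uflCost
        gcongr with l
        exact (hclient l).trans (by linarith [hopen l])
    _ ≤ _ := by
      rw [sum_add_distrib, ← mul_sum, add_assoc]
      gcongr

section Assignment

variable (a : Fin NC → Fin NS)

def assignmentFlow : Plant NS NC → Plant NS NC → ℝ
  | .inl j, .inr l => if a l = j then 1 else 0
  | _, _ => 0

def assignmentProduction : Plant NS NC → ℝ
  | .inl j => ∑ l, if a l = j then 1 else 0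
  | .inr _ => 0

def openIndicator (O : Finset (Fin NS)) : Plant NS NC → ℝ
  | .inl j => if j ∈ O then 1 else 0
  | .inr _ => 0

lemma assignmentFlow_self (p : Plant NS NC) : assignmentFlow a p p = 0 := by
  rcases p with j | l <;> rfl

lemma assignmentFlow_eq_zero {p m : Plant NS NC}
    (h : ¬ ∃ (j : Fin NS) (l : Fin NC), p = .inl j ∧ m = .inr l) : assignmentFlow a p m = 0 := by
  rcases p with j | l <;> rcases m with j' | l'
  · rfl
  · exact absurd ⟨j, l', rfl, rfl⟩ h
  · rfl
  · rfl

lemma assignmentFlow_mem_zero_one (p m : Plant NS NC) :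
    assignmentFlow a p m = 0 ∨ assignmentFlow a p m = 1 := by
  rcases p with j | l <;> rcases m with j' | l' <;>
    first | exact .inl rfl | exact (ite_eq_or_eq _ _ _).symm

lemma umplsFeasible_assignment {O : Finset (Fin NS)} (ha : ∀ l, a l ∈ O) :
    umplsFeasible (redD NS NC) (assignmentProduction a) 0 (assignmentFlow a) (openIndicator O)
      (assignmentFlow a) := by
  refine ⟨?_, fun _ => le_rfl, ?_, assignmentFlow_self a, ?_, ?_, assignmentFlow_mem_zero_one a,
    ?_, fun p m h => (assignmentFlow_mem_zero_one a p m).resolve_left h.ne'⟩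
  · rintro (j | l) <;> simp only [assignmentProduction]
    · exact sum_nonneg fun l _ => by split_ifs <;> norm_num
    · rfl
  · exact fun p m => (assignmentFlow_mem_zero_one a p m).elim (·.ge) fun h => h ▸ zero_le_one
  · intro p
    rw [sum_erase univ (f := fun m => assignmentFlow a m p) (assignmentFlow_self a p),
      sum_erase univ (f := assignmentFlow a p) (assignmentFlow_self a p)]
    rcases p with j | l <;>
      simp [Fintype.sum_sum_type, assignmentFlow, assignmentProduction, redD]
  · rintro (j | l)
    exacts [(ite_eq_or_eq _ _ _).symm, .inl rfl]
  · rintro (j | l) h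
    · have hj : j ∈ O := by
        by_contra hj
        simp only [assignmentProduction] at h
        rw [sum_eq_zero fun l _ => if_neg fun (hl : a l = j) => hj (hl ▸ ha l)] at h
        exact lt_irrefl _ h
      simp [openIndicator, hj]
    · exact absurd h (lt_irrefl 0)

lemma umplsCost_assignment (O : Finset (Fin NS)) :
    umplsCost (redC NS NC q v) (redF NS NC q v) (redH NS NC) (redR NS NC q v) (redFix NS NC)
        (assignmentProduction a) 0 (assignmentFlow a) (openIndicator O) (assignmentFlow a)
      = uflCost NS NC q v O a := by
  rw [umplsCost_red_eq (assignmentFlow_self a)]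
  simp [omegaUnits, assignmentFlow, assignmentProduction, openIndicator, uflCost, sum_ite_mem]

end Assignment

end

/-- if the constructed UMPLS instance has a feasible solution of cost `K < Ω`,
then it has a feasible solution of cost at most `K` whose transfers occur only on
facility→client arcs. -/
theorem stmt_1 (NS NC : ℕ) (q : Fin NS → ℝ) (v : Fin NC → Fin NS → ℝ)
    (hq : ∀ j, 0 ≤ q j) (hv : ∀ l j, 0 ≤ v l j)
    (K : ℝ) (hK : K < Omega NS NC q v)
    (hsol : ∃ (x s : Plant NS NC → ℝ) (w : Plant NS NC → Plant NS NC → ℝ)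
        (y : Plant NS NC → ℝ) (Y : Plant NS NC → Plant NS NC → ℝ),
      umplsFeasible (redD NS NC) x s w y Y ∧
        umplsCost (redC NS NC q v) (redF NS NC q v) (redH NS NC)
          (redR NS NC q v) (redFix NS NC) x s w y Y = K) :
    ∃ (x s : Plant NS NC → ℝ) (w : Plant NS NC → Plant NS NC → ℝ)
        (y : Plant NS NC → ℝ) (Y : Plant NS NC → Plant NS NC → ℝ),
      umplsFeasible (redD NS NC) x s w y Y ∧
      umplsCost (redC NS NC q v) (redF NS NC q v) (redH NS NC)
        (redR NS NC q v) (redFix NS NC) x s w y Y ≤ K ∧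
      ∀ p l : Plant NS NC,
        (¬ ∃ (j : Fin NS) (c' : Fin NC), p = Sum.inl j ∧ l = Sum.inr c') → w p l = 0 := by
  obtain ⟨x, s, w, y, Y, hf, rfl⟩ := hsol
  obtain ⟨O, a, ha, hle⟩ := exists_uflCost_le_umplsCost hq hv hf hK
  exact ⟨_, _, _, _, _, umplsFeasible_assignment a ha, (umplsCost_assignment a O).trans_le hle,
    fun _ _ => assignmentFlow_eq_zero a⟩
end
end

section
/- In the UMPLS instance constructed from a UFL instance, every feasible solution with cost K < Ω satisfies: y l = 0 and x l = 0 at every client plant l, and for every client plant l the total transfer received, ∑_{p ≠ l} w p l, is at least 1. -/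
open Finset

noncomputable section

/-- every feasible solution of the constructed UMPLS instance with cost `K < Ω`
has `y = 0` and `x = 0` at every client plant, and every client plant receives total transfer
at least 1. -/
theorem stmt_3 (NS NC : ℕ) (q : Fin NS → ℝ) (v : Fin NC → Fin NS → ℝ)
    (hq : ∀ j, 0 ≤ q j) (hv : ∀ l j, 0 ≤ v l j)
    (K : ℝ) (hK : K < Omega NS NC q v)
    (x s : Plant NS NC → ℝ) (w : Plant NS NC → Plant NS NC → ℝ)
    (y : Plant NS NC → ℝ) (Y : Plant NS NC → Plant NS NC → ℝ)
    (hfeas : umplsFeasible (redD NS NC) x s w y Y)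
    (hcost : umplsCost (redC NS NC q v) (redF NS NC q v) (redH NS NC)
      (redR NS NC q v) (redFix NS NC) x s w y Y = K) :
    ∀ l : Fin NC,
      y (Sum.inr l) = 0 ∧ x (Sum.inr l) = 0 ∧
      1 ≤ ∑ p ∈ univ.erase (Sum.inr l : Plant NS NC), w p (Sum.inr l) := by
  obtain ⟨hx, hs, hw, hww, hbal, hy01, hY01, hxy, hwY⟩ := hfeas
  have hΩ : 0 ≤ Omega NS NC q v := by
    apply mul_nonneg
    · exact add_nonneg (Real.iSup_nonneg hq)
        (Real.iSup_nonneg fun l => Real.iSup_nonneg (hv l))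
    · positivity
  have hcnn : ∀ p, 0 ≤ redC NS NC q v p := by rintro (j | l) <;> simpa [redC] using hΩ
  have hfnn : ∀ p, 0 ≤ redF NS NC q v p := by
    rintro (j | l) <;> simp [redF, hq, hΩ]
  have hrnn : ∀ p l, 0 ≤ redR NS NC q v p l := by
    rintro (j | l) (j' | l') <;> simp [redR, hv, hΩ]
  have hynn : ∀ p, 0 ≤ y p := fun p => by rcases hy01 p with h | h <;> simp [h]
  have hterm : ∀ p : Plant NS NC, 0 ≤ redC NS NC q v p * x p + redF NS NC q v p * y p
      + redH NS NC p * s p := fun p => by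
    have := mul_nonneg (hcnn p) (hx p)
    have := mul_nonneg (hfnn p) (hynn p)
    simp [redH]; linarith
  have hterm2 : ∀ p : Plant NS NC, 0 ≤ ∑ l ∈ univ.erase p,
      (redR NS NC q v p l * w p l + redFix NS NC p l * Y p l) := fun p =>
    Finset.sum_nonneg fun l _ => by
      have := mul_nonneg (hrnn p l) (hw p l); simp [redFix]; linarith
  intro l
  -- cost lower bound by the single diagonal term at client plant l
  have hK1 : redF NS NC q v (Sum.inr l) * y (Sum.inr l) ≤ K := by
    rw [← hcost, umplsCost]
    have h1 : redF NS NC q v (Sum.inr l) * y (Sum.inr l)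
        ≤ redC NS NC q v (Sum.inr l) * x (Sum.inr l)
          + redF NS NC q v (Sum.inr l) * y (Sum.inr l)
          + redH NS NC (Sum.inr l) * s (Sum.inr l) := by
      have := mul_nonneg (hcnn (Sum.inr l)) (hx (Sum.inr l))
      simp [redH]; linarith
    have h2 := Finset.single_le_sum (f := fun p => redC NS NC q v p * x p
        + redF NS NC q v p * y p + redH NS NC p * s p)
      (fun p _ => hterm p) (Finset.mem_univ (Sum.inr l : Plant NS NC))
    have h3 := Finset.sum_nonneg (fun p (_ : p ∈ (univ : Finset (Plant NS NC))) => hterm2 p)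
    linarith
  have hy0 : y (Sum.inr l) = 0 := by
    rcases hy01 (Sum.inr l) with h | h
    · exact h
    · exfalso
      rw [h, mul_one] at hK1
      simp only [redF] at hK1
      linarith
  have hx0 : x (Sum.inr l) = 0 := by
    by_contra hne
    have hpos : 0 < x (Sum.inr l) := lt_of_le_of_ne (hx _) (Ne.symm hne)
    have := hxy _ hpos
    rw [hy0] at this; norm_num at this
  refine ⟨hy0, hx0, ?_⟩
  have hb := hbal (Sum.inr l)
  have hout : 0 ≤ ∑ p ∈ univ.erase (Sum.inr l : Plant NS NC), w (Sum.inr l) p :=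
    Finset.sum_nonneg fun p _ => hw _ _
  rw [hx0] at hb
  simp only [redD] at hb
  linarith [hs (Sum.inr l : Plant NS NC)]
end
end

section
/- If the UMPLS instance constructed from a UFL instance admits a feasible solution with cost K < Ω, then the UFL instance admits a feasible solution (an open set S' ⊆ S and an assignment a : C → S with a l ∈ S' for all l) whose cost is at most K. -/
open Finset

noncomputable section

/-- if the constructed UMPLS instance has a feasible solution of cost `K < Ω`,
then the UFL instance has a feasible solution (open set `S'` and assignment `a` into `S'`)
of cost at most `K`. -/
theorem stmt_4 (NS NC : ℕ) (q : Fin NS → ℝ) (v : Fin NC → Fin NS → ℝ)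
    (hq : ∀ j, 0 ≤ q j) (hv : ∀ l j, 0 ≤ v l j)
    (K : ℝ) (hK : K < Omega NS NC q v)
    (hsol : ∃ (x s : Plant NS NC → ℝ) (w : Plant NS NC → Plant NS NC → ℝ)
        (y : Plant NS NC → ℝ) (Y : Plant NS NC → Plant NS NC → ℝ),
      umplsFeasible (redD NS NC) x s w y Y ∧
        umplsCost (redC NS NC q v) (redF NS NC q v) (redH NS NC)
          (redR NS NC q v) (redFix NS NC) x s w y Y = K) :
    ∃ (S' : Finset (Fin NS)) (a : Fin NC → Fin NS),
      (∀ l, a l ∈ S') ∧ uflCost NS NC q v S' a ≤ K := by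
  classical
  obtain ⟨x, s, w, y, Y, ⟨hx0, hs0, hw0, hww, hbal, hy01, hY01, hxy, hwY⟩, hcost⟩ := hsol
  set Ω := Omega NS NC q v with hΩdef
  set V := (⨆ l, ⨆ j, v l j : ℝ) with hVdef
  have hQ0 : 0 ≤ ⨆ j, q j := Real.iSup_nonneg hq
  have hV0 : 0 ≤ V := by
    rw [hVdef]; exact Real.iSup_nonneg fun l => Real.iSup_nonneg (hv l)
  have hΩ0 : 0 ≤ Ω := by
    rw [hΩdef]; unfold Omega
    refine mul_nonneg ?_ (by positivity)
    rw [← hVdef]; linarith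
  have hVle : ∀ l j, v l j ≤ V := by
    intro l j
    rw [hVdef]
    exact le_trans (le_ciSup (f := fun j => v l j) (Set.Finite.bddAbove (Set.finite_range _)) j)
      (le_ciSup (f := fun l => ⨆ j, v l j) (Set.Finite.bddAbove (Set.finite_range _)) l)
  have hVΩ : V ≤ Ω := by
    rw [hVdef, hΩdef]; unfold Omega
    have h1 : (0:ℝ) ≤ (NC:ℝ) := Nat.cast_nonneg NC
    have h2 : 0 ≤ (⨆ l, ⨆ j, v l j : ℝ) := by rw [← hVdef]; exact hV0
    nlinarith [mul_nonneg hQ0 h1, mul_nonneg h2 h1]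
  have hy0 : ∀ p, 0 ≤ y p := by
    intro p; rcases hy01 p with h | h <;> simp [h]
  -- pointwise reductions of the instance data
  have hr1 : ∀ (j j' : Fin NS), redR NS NC q v (Sum.inl j) (Sum.inl j') = Ω := fun _ _ => rfl
  have hr2 : ∀ (j : Fin NS) (l : Fin NC), redR NS NC q v (Sum.inl j) (Sum.inr l) = v l j :=
    fun _ _ => rfl
  have hr3 : ∀ (l : Fin NC) (j : Fin NS), redR NS NC q v (Sum.inr l) (Sum.inl j) = Ω :=
    fun _ _ => rfl
  have hr4 : ∀ (l l' : Fin NC), redR NS NC q v (Sum.inr l) (Sum.inr l') = Ω := fun _ _ => rfl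
  have hc1 : ∀ (j : Fin NS), redC NS NC q v (Sum.inl j) = 0 := fun _ => rfl
  have hc2 : ∀ (l : Fin NC), redC NS NC q v (Sum.inr l) = Ω := fun _ => rfl
  have hf1 : ∀ (j : Fin NS), redF NS NC q v (Sum.inl j) = q j := fun _ => rfl
  have hf2 : ∀ (l : Fin NC), redF NS NC q v (Sum.inr l) = Ω := fun _ => rfl
  have hhh : ∀ p, redH NS NC p = 0 := fun _ => rfl
  have hd1 : ∀ (j : Fin NS), redD NS NC (Sum.inl j) = 0 := fun _ => rfl
  have hd2 : ∀ (l : Fin NC), redD NS NC (Sum.inr l) = 1 := fun _ => rfl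
  have harc : ∀ p : Plant NS NC,
      ∑ l ∈ univ.erase p, (redR NS NC q v p l * w p l + redFix NS NC p l * Y p l)
        = ∑ l, redR NS NC q v p l * w p l := by
    intro p
    have he : ∀ l, redR NS NC q v p l * w p l + redFix NS NC p l * Y p l
        = redR NS NC q v p l * w p l := by intro l; simp [redFix]
    simp only [he]
    exact Finset.sum_erase _ (by rw [hww p, mul_zero])
  have hinflow : ∀ p : Plant NS NC, ∑ l ∈ univ.erase p, w l p = ∑ l, w l p := fun p =>
    Finset.sum_erase _ (hww p)
  have houtflow : ∀ p : Plant NS NC, ∑ l ∈ univ.erase p, w p l = ∑ l, w p l := fun p =>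
    Finset.sum_erase _ (hww p)
  -- named pieces of the cost
  set A := ∑ j, q j * y (Sum.inl j) with hAdef
  set X := ∑ l, x (Sum.inr l) with hXdef
  set YC := ∑ l, y (Sum.inr l) with hYCdef
  set Cc := ∑ j, ∑ l, v l j * w (Sum.inl j) (Sum.inr l) with hCcdef
  set Wff := ∑ j, ∑ j', w (Sum.inl j) (Sum.inl j') with hWffdef
  set Wcf := ∑ l, ∑ j, w (Sum.inr l) (Sum.inl j) with hWcfdef
  set Wcc := ∑ l, ∑ l', w (Sum.inr l) (Sum.inr l') with hWccdef
  have hKeq : A + Ω * X + Ω * YC + (Ω * Wff + Cc + (Ω * Wcf + Ω * Wcc)) = K := by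
    rw [← hcost]
    unfold umplsCost
    simp only [harc]
    rw [hAdef, hXdef, hYCdef, hCcdef, hWffdef, hWcfdef, hWccdef]
    simp only [Fintype.sum_sum_type, hr1, hr2, hr3, hr4, hc1, hc2, hf1, hf2, hhh,
      Finset.mul_sum, Finset.sum_add_distrib, zero_mul, mul_zero, add_zero, zero_add,
      Finset.sum_const_zero]
    ring
  -- nonnegativity of the pieces
  have hA0 : 0 ≤ A := by
    rw [hAdef]; exact sum_nonneg fun j _ => mul_nonneg (hq j) (hy0 _)
  have hX0 : 0 ≤ X := by rw [hXdef]; exact sum_nonneg fun _ _ => hx0 _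
  have hYC0 : 0 ≤ YC := by rw [hYCdef]; exact sum_nonneg fun _ _ => hy0 _
  have hCc0 : 0 ≤ Cc := by
    rw [hCcdef]
    exact sum_nonneg fun j _ => sum_nonneg fun l _ => mul_nonneg (hv l j) (hw0 _ _)
  have hWff0 : 0 ≤ Wff := by
    rw [hWffdef]; exact sum_nonneg fun _ _ => sum_nonneg fun _ _ => hw0 _ _
  have hWcf0 : 0 ≤ Wcf := by
    rw [hWcfdef]; exact sum_nonneg fun _ _ => sum_nonneg fun _ _ => hw0 _ _
  have hWcc0 : 0 ≤ Wcc := by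
    rw [hWccdef]; exact sum_nonneg fun _ _ => sum_nonneg fun _ _ => hw0 _ _
  have hK0 : 0 ≤ K := by
    nlinarith [mul_nonneg hΩ0 hX0, mul_nonneg hΩ0 hYC0, mul_nonneg hΩ0 hWff0,
      mul_nonneg hΩ0 hWcf0, mul_nonneg hΩ0 hWcc0]
  have hΩpos : 0 < Ω := lt_of_le_of_lt hK0 hK
  have hΩΦ : Ω * (X + Wcc + (Wff + Wcf)) ≤ K := by
    have hexp : Ω * (X + Wcc + (Wff + Wcf)) = Ω * X + Ω * Wcc + (Ω * Wff + Ω * Wcf) := by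
      ring
    nlinarith [mul_nonneg hΩ0 hYC0]
  have hΦlt : X + Wcc + (Wff + Wcf) < 1 := by
    by_contra hcon
    push_neg at hcon
    have := mul_le_mul_of_nonneg_left hcon (le_of_lt hΩpos)
    nlinarith
  -- balance equations split by plant type
  have hbalF : ∀ j : Fin NS,
      x (Sum.inl j) + ((∑ j', w (Sum.inl j') (Sum.inl j)) + ∑ l, w (Sum.inr l) (Sum.inl j))
        = s (Sum.inl j)
          + ((∑ j', w (Sum.inl j) (Sum.inl j')) + ∑ l, w (Sum.inl j) (Sum.inr l)) := by
    intro j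
    have h := hbal (Sum.inl j)
    rw [hinflow (Sum.inl j), houtflow (Sum.inl j)] at h
    simp only [Fintype.sum_sum_type, hd1] at h
    linarith
  have hbalC : ∀ l : Fin NC,
      x (Sum.inr l) + ((∑ j, w (Sum.inl j) (Sum.inr l)) + ∑ l', w (Sum.inr l') (Sum.inr l))
        = s (Sum.inr l)
          + ((∑ j, w (Sum.inr l) (Sum.inl j)) + ∑ l', w (Sum.inr l) (Sum.inr l')) + 1 := by
    intro l
    have h := hbal (Sum.inr l)
    rw [hinflow (Sum.inr l), houtflow (Sum.inr l)] at h
    simp only [Fintype.sum_sum_type, hd2] at h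
    linarith
  -- the producing facilities
  set J : Finset (Fin NS) := univ.filter (fun j => 0 < x (Sum.inl j)) with hJdef
  set notJ : Finset (Fin NS) := univ.filter (fun j => ¬ 0 < x (Sum.inl j)) with hnotJdef
  have hsplitJ : ∀ g : Fin NS → ℝ, ∑ j ∈ J, g j + ∑ j ∈ notJ, g j = ∑ j, g j := by
    intro g
    rw [hJdef, hnotJdef]
    exact Finset.sum_filter_add_sum_filter_not _ _ g
  have hJx : ∀ j, j ∈ J → 0 < x (Sum.inl j) := by
    intro j hj; rw [hJdef] at hj; exact (Finset.mem_filter.mp hj).2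
  set δ : Fin NC → ℝ := fun l => x (Sum.inr l) + (∑ l', w (Sum.inr l') (Sum.inr l))
      + ∑ j ∈ notJ, w (Sum.inl j) (Sum.inr l) with hδdef
  have hδ0 : ∀ l, 0 ≤ δ l := by
    intro l
    simp only [hδdef]
    exact add_nonneg (add_nonneg (hx0 _) (sum_nonneg fun _ _ => hw0 _ _))
      (sum_nonneg fun _ _ => hw0 _ _)
  have hbadsum : ∑ j ∈ notJ, ∑ l, w (Sum.inl j) (Sum.inr l) ≤ Wff + Wcf := by
    have h1 : ∀ j ∈ notJ, ∑ l, w (Sum.inl j) (Sum.inr l)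
        ≤ (∑ j', w (Sum.inl j') (Sum.inl j)) + ∑ l, w (Sum.inr l) (Sum.inl j) := by
      intro j hj
      rw [hnotJdef] at hj
      have hxz : x (Sum.inl j) = 0 :=
        le_antisymm (not_lt.mp (Finset.mem_filter.mp hj).2) (hx0 _)
      have hb := hbalF j
      have hs' := hs0 (Sum.inl j)
      have ho : 0 ≤ ∑ j', w (Sum.inl j) (Sum.inl j') := sum_nonneg fun _ _ => hw0 _ _
      linarith
    calc ∑ j ∈ notJ, ∑ l, w (Sum.inl j) (Sum.inr l)
        ≤ ∑ j ∈ notJ, ((∑ j', w (Sum.inl j') (Sum.inl j)) + ∑ l, w (Sum.inr l) (Sum.inl j)) :=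
          Finset.sum_le_sum h1
      _ ≤ ∑ j, ((∑ j', w (Sum.inl j') (Sum.inl j)) + ∑ l, w (Sum.inr l) (Sum.inl j)) := by
          rw [hnotJdef]
          exact Finset.sum_le_sum_of_subset_of_nonneg (Finset.filter_subset _ _)
            (fun _ _ _ => add_nonneg (sum_nonneg fun _ _ => hw0 _ _)
              (sum_nonneg fun _ _ => hw0 _ _))
      _ = Wff + Wcf := by
          rw [Finset.sum_add_distrib, hWffdef, hWcfdef]
          congr 1
          · exact Finset.sum_comm
          · exact Finset.sum_comm
  have hδsum : ∑ l, δ l ≤ X + Wcc + (Wff + Wcf) := by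
    have e : ∑ l, δ l = X + (∑ l, ∑ l', w (Sum.inr l') (Sum.inr l))
        + ∑ l, ∑ j ∈ notJ, w (Sum.inl j) (Sum.inr l) := by
      simp only [hδdef]
      rw [Finset.sum_add_distrib, Finset.sum_add_distrib, hXdef]
    have e2 : (∑ l, ∑ l', w (Sum.inr l') (Sum.inr l)) = Wcc := by
      rw [hWccdef]; exact Finset.sum_comm
    have e3 : (∑ l, ∑ j ∈ notJ, w (Sum.inl j) (Sum.inr l))
        = ∑ j ∈ notJ, ∑ l, w (Sum.inl j) (Sum.inr l) := Finset.sum_comm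
    linarith
  have hδlt : ∀ l, δ l < 1 := by
    intro l
    have h1 : δ l ≤ ∑ l', δ l' := Finset.single_le_sum (fun l' _ => hδ0 l') (mem_univ l)
    linarith
  have hGl : ∀ l, 1 - δ l ≤ ∑ j ∈ J, w (Sum.inl j) (Sum.inr l) := by
    intro l
    have hb := hbalC l
    have hsp := hsplitJ (fun j => w (Sum.inl j) (Sum.inr l))
    have h1 : 0 ≤ s (Sum.inr l) := hs0 _
    have h2 : 0 ≤ ∑ j, w (Sum.inr l) (Sum.inl j) := sum_nonneg fun _ _ => hw0 _ _
    have h3 : 0 ≤ ∑ l', w (Sum.inr l) (Sum.inr l') := sum_nonneg fun _ _ => hw0 _ _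
    simp only [hδdef]
    linarith
  -- choose the cheapest positively-serving producing facility for each client
  have hmin : ∀ l : Fin NC, ∃ j, (j ∈ J ∧ 0 < w (Sum.inl j) (Sum.inr l)) ∧
      ∀ j', j' ∈ J → 0 < w (Sum.inl j') (Sum.inr l) → v l j ≤ v l j' := by
    intro l
    have hpos : 0 < ∑ j ∈ J, w (Sum.inl j) (Sum.inr l) := by
      have := hδlt l
      have := hGl l
      linarith
    have hTne : (J.filter (fun j => 0 < w (Sum.inl j) (Sum.inr l))).Nonempty := by
      by_contra hemp
      rw [Finset.not_nonempty_iff_eq_empty] at hemp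
      have hall := Finset.filter_eq_empty_iff.mp hemp
      have hz : ∑ j ∈ J, w (Sum.inl j) (Sum.inr l) = 0 :=
        Finset.sum_eq_zero fun j hj => le_antisymm (not_lt.mp (hall hj)) (hw0 _ _)
      linarith
    obtain ⟨j0, hj0, hj0min⟩ := Finset.exists_min_image _ (v l) hTne
    refine ⟨j0, ⟨(Finset.mem_filter.mp hj0).1, (Finset.mem_filter.mp hj0).2⟩, ?_⟩
    intro j' hj' hw'
    exact hj0min j' (Finset.mem_filter.mpr ⟨hj', hw'⟩)
  choose a ha using hmin
  refine ⟨univ.filter (fun j => y (Sum.inl j) = 1), a, fun l => ?_, ?_⟩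
  · exact Finset.mem_filter.mpr ⟨mem_univ _, hxy _ (hJx _ (ha l).1.1)⟩
  · have hSq : ∑ j ∈ univ.filter (fun j => y (Sum.inl j) = 1), q j = A := by
      rw [hAdef, Finset.sum_filter]
      refine Finset.sum_congr rfl fun j _ => ?_
      rcases hy01 (Sum.inl j) with h | h <;> simp [h]
    have hkey : ∀ l, v l (a l) ≤ (∑ j, v l j * w (Sum.inl j) (Sum.inr l)) + V * δ l := by
      intro l
      have hG := hGl l
      have h1 : v l (a l) * (∑ j ∈ J, w (Sum.inl j) (Sum.inr l))
          ≤ ∑ j ∈ J, v l j * w (Sum.inl j) (Sum.inr l) := by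
        rw [Finset.mul_sum]
        refine Finset.sum_le_sum fun j hj => ?_
        rcases lt_or_eq_of_le (hw0 (Sum.inl j) (Sum.inr l)) with hwp | hwz
        · exact mul_le_mul_of_nonneg_right ((ha l).2 j hj hwp) (le_of_lt hwp)
        · rw [← hwz, mul_zero, mul_zero]
      have h2 : ∑ j ∈ J, v l j * w (Sum.inl j) (Sum.inr l)
          ≤ ∑ j, v l j * w (Sum.inl j) (Sum.inr l) := by
        rw [hJdef]
        exact Finset.sum_le_sum_of_subset_of_nonneg (Finset.filter_subset _ _)
          (fun j _ _ => mul_nonneg (hv l j) (hw0 _ _))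
      have h3 : v l (a l) * (1 - ∑ j ∈ J, w (Sum.inl j) (Sum.inr l)) ≤ v l (a l) * δ l :=
        mul_le_mul_of_nonneg_left (by linarith) (hv _ _)
      have h4 : v l (a l) * δ l ≤ V * δ l :=
        mul_le_mul_of_nonneg_right (hVle l (a l)) (hδ0 l)
      have h5 : v l (a l) * (∑ j ∈ J, w (Sum.inl j) (Sum.inr l))
          + v l (a l) * (1 - ∑ j ∈ J, w (Sum.inl j) (Sum.inr l)) = v l (a l) := by ring
      linarith
    have hsumkey : ∑ l, v l (a l) ≤ Cc + V * ∑ l, δ l := by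
      calc ∑ l, v l (a l)
          ≤ ∑ l, ((∑ j, v l j * w (Sum.inl j) (Sum.inr l)) + V * δ l) :=
            Finset.sum_le_sum fun l _ => hkey l
        _ = (∑ l, ∑ j, v l j * w (Sum.inl j) (Sum.inr l)) + V * ∑ l, δ l := by
            rw [Finset.sum_add_distrib, ← Finset.mul_sum]
        _ = Cc + V * ∑ l, δ l := by
            have := Finset.sum_comm (s := (univ : Finset (Fin NC))) (t := (univ : Finset (Fin NS)))
              (f := fun l j => v l j * w (Sum.inl j) (Sum.inr l))
            rw [hCcdef]
            linarith
    have hD0 : 0 ≤ ∑ l, δ l := sum_nonneg fun l _ => hδ0 l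
    have hVD : V * ∑ l, δ l ≤ Ω * (X + Wcc + (Wff + Wcf)) :=
      mul_le_mul hVΩ hδsum hD0 hΩ0
    have hexp : Ω * (X + Wcc + (Wff + Wcf)) = Ω * X + Ω * Wcc + (Ω * Wff + Ω * Wcf) := by ring
    have hΩYC : 0 ≤ Ω * YC := mul_nonneg hΩ0 hYC0
    unfold uflCost
    linarith
end
end

section
/- Given a JRP instance and a feasible JRP solution (x', s', y', Y') with cost K', the MIU2PLS instance constructed from the JRP instance admits a feasible solution with cost equal to K'. Concretely, the solution sets, for every item i and period t: y^{i1}_t = y'^i_t, x^{i1}_t = x'^i_t, y^{i2}_t = 0, x^{i2}_t = 0, s^{i1}_t = 0, s^{i2}_t = s'^i_t, w^{i12}_t = x'^i_t, w^{i21}_t = 0, Y^{12}_t = Y'_t, Y^{21}_t = 0. -/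
open Finset

noncomputable section

/-- Feasibility of a JRP solution `(x', s', y', Y')`. Periods are `1,…,NT`;
index `0` is used for the (zero) initial inventory. -/
def jrpFeasible (NI NT : ℕ) (d' : Fin NI → ℕ → ℝ)
    (x' s' y' : Fin NI → ℕ → ℝ) (Y' : ℕ → ℝ) : Prop :=
  (∀ i, ∀ t ∈ Icc 1 NT, 0 ≤ x' i t) ∧
  (∀ i, ∀ t ∈ Icc 1 NT, 0 ≤ s' i t) ∧
  (∀ i, s' i 0 = 0) ∧
  (∀ i, ∀ t ∈ Icc 1 NT, s' i (t - 1) + x' i t = s' i t + d' i t) ∧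
  (∀ i, ∀ t ∈ Icc 1 NT, y' i t = 0 ∨ y' i t = 1) ∧
  (∀ t ∈ Icc 1 NT, Y' t = 0 ∨ Y' t = 1) ∧
  (∀ i, ∀ t ∈ Icc 1 NT, 0 < x' i t → y' i t = 1) ∧
  (∀ i, ∀ t ∈ Icc 1 NT, y' i t ≤ Y' t)

/-- Cost of a JRP solution. -/
def jrpCost (NI NT : ℕ) (c' f' h' : Fin NI → ℕ → ℝ) (F' : ℕ → ℝ)
    (x' s' y' : Fin NI → ℕ → ℝ) (Y' : ℕ → ℝ) : ℝ :=
  (∑ i, ∑ t ∈ Icc 1 NT, (c' i t * x' i t + f' i t * y' i t + h' i t * s' i t))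
    + ∑ t ∈ Icc 1 NT, F' t * Y' t

/-- `Ω = (max_{i,t} f' + max_{i,t} c' + max_{i,t} h' + max_t F') * (NT + 1)`,
maxima taken over the periods `1,…,NT`. -/
def jrpOmega (NI NT : ℕ) (f' c' h' : Fin NI → ℕ → ℝ) (F' : ℕ → ℝ) : ℝ :=
  ((⨆ i : Fin NI, ⨆ t : (Icc 1 NT : Finset ℕ), f' i t)
    + (⨆ i : Fin NI, ⨆ t : (Icc 1 NT : Finset ℕ), c' i t)
    + (⨆ i : Fin NI, ⨆ t : (Icc 1 NT : Finset ℕ), h' i t)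
    + (⨆ t : (Icc 1 NT : Finset ℕ), F' t)) * (NT + 1)

/-- Feasibility of a two-plant lot-sizing (MIU2PLS) solution. Plant 1 variables carry
index `1`, plant 2 variables index `2`; `w12`/`w21` are the transfers `1→2` and `2→1`. -/
def miu2Feasible (NI NT : ℕ) (d1 d2 : Fin NI → ℕ → ℝ)
    (x1 x2 s1 s2 w12 w21 y1 y2 : Fin NI → ℕ → ℝ) (Y12 Y21 : ℕ → ℝ) : Prop :=
  (∀ i, ∀ t ∈ Icc 1 NT, 0 ≤ x1 i t ∧ 0 ≤ x2 i t ∧ 0 ≤ s1 i t ∧ 0 ≤ s2 i t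
      ∧ 0 ≤ w12 i t ∧ 0 ≤ w21 i t) ∧
  (∀ i, s1 i 0 = 0 ∧ s2 i 0 = 0) ∧
  (∀ i, ∀ t ∈ Icc 1 NT, s1 i (t - 1) + x1 i t + w21 i t = s1 i t + w12 i t + d1 i t) ∧
  (∀ i, ∀ t ∈ Icc 1 NT, s2 i (t - 1) + x2 i t + w12 i t = s2 i t + w21 i t + d2 i t) ∧
  (∀ i, ∀ t ∈ Icc 1 NT, (y1 i t = 0 ∨ y1 i t = 1) ∧ (y2 i t = 0 ∨ y2 i t = 1)) ∧
  (∀ t ∈ Icc 1 NT, (Y12 t = 0 ∨ Y12 t = 1) ∧ (Y21 t = 0 ∨ Y21 t = 1)) ∧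
  (∀ i, ∀ t ∈ Icc 1 NT, (0 < x1 i t → y1 i t = 1) ∧ (0 < x2 i t → y2 i t = 1)) ∧
  (∀ i, ∀ t ∈ Icc 1 NT, (0 < w12 i t → Y12 t = 1) ∧ (0 < w21 i t → Y21 t = 1))

/-- Cost of a MIU2PLS solution. -/
def miu2Cost (NI NT : ℕ) (c1 f1 h1 r12 c2 f2 h2 r21 : Fin NI → ℕ → ℝ) (F12 F21 : ℕ → ℝ)
    (x1 x2 s1 s2 w12 w21 y1 y2 : Fin NI → ℕ → ℝ) (Y12 Y21 : ℕ → ℝ) : ℝ :=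
  (∑ i, ∑ t ∈ Icc 1 NT,
      (c1 i t * x1 i t + f1 i t * y1 i t + h1 i t * s1 i t + r12 i t * w12 i t
        + c2 i t * x2 i t + f2 i t * y2 i t + h2 i t * s2 i t + r21 i t * w21 i t))
    + ∑ t ∈ Icc 1 NT, (F12 t * Y12 t + F21 t * Y21 t)

/-- Feasibility of a solution of the MIU2PLS instance constructed from a JRP instance:
plant 1 has zero demand, plant 2 has the JRP demands `d'`. -/
def redMiu2Feasible (NI NT : ℕ) (d' : Fin NI → ℕ → ℝ)
    (x1 x2 s1 s2 w12 w21 y1 y2 : Fin NI → ℕ → ℝ) (Y12 Y21 : ℕ → ℝ) : Prop :=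
  miu2Feasible NI NT (fun _ _ => 0) d' x1 x2 s1 s2 w12 w21 y1 y2 Y12 Y21

/-- Cost of a solution of the MIU2PLS instance constructed from a JRP instance:
plant 1 has `c' , f'`, holding cost `Ω`, transfer cost `0` with fixed cost `F'`;
plant 2 has production/setup/transfer costs `Ω` and holding costs `h'`. -/
def redMiu2Cost (NI NT : ℕ) (f' c' h' : Fin NI → ℕ → ℝ) (F' : ℕ → ℝ)
    (x1 x2 s1 s2 w12 w21 y1 y2 : Fin NI → ℕ → ℝ) (Y12 Y21 : ℕ → ℝ) : ℝ :=
  miu2Cost NI NT c' f' (fun _ _ => jrpOmega NI NT f' c' h' F') (fun _ _ => 0)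
    (fun _ _ => jrpOmega NI NT f' c' h' F') (fun _ _ => jrpOmega NI NT f' c' h' F')
    h' (fun _ _ => jrpOmega NI NT f' c' h' F')
    F' (fun _ => jrpOmega NI NT f' c' h' F')
    x1 x2 s1 s2 w12 w21 y1 y2 Y12 Y21

/-- from a feasible JRP solution `(x', s', y', Y')` with cost `K'`, the solution
`x1 = x'`, `x2 = 0`, `s1 = 0`, `s2 = s'`, `w12 = x'`, `w21 = 0`, `y1 = y'`, `y2 = 0`,
`Y12 = Y'`, `Y21 = 0` is a feasible solution of the constructed MIU2PLS instance with
cost equal to `K'`. -/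
theorem stmt_6 (NI NT : ℕ)
    (d' f' c' h' : Fin NI → ℕ → ℝ) (F' : ℕ → ℝ)
    (hd' : ∀ i, ∀ t ∈ Icc 1 NT, 0 ≤ d' i t)
    (hf' : ∀ i, ∀ t ∈ Icc 1 NT, 0 ≤ f' i t)
    (hc' : ∀ i, ∀ t ∈ Icc 1 NT, 0 ≤ c' i t)
    (hh' : ∀ i, ∀ t ∈ Icc 1 NT, 0 ≤ h' i t)
    (hF' : ∀ t ∈ Icc 1 NT, 0 ≤ F' t)
    (x' s' y' : Fin NI → ℕ → ℝ) (Y' : ℕ → ℝ) (K' : ℝ)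
    (hfeas : jrpFeasible NI NT d' x' s' y' Y')
    (hcost : jrpCost NI NT c' f' h' F' x' s' y' Y' = K') :
    redMiu2Feasible NI NT d'
        x' (fun _ _ => 0) (fun _ _ => 0) s' x' (fun _ _ => 0)
        y' (fun _ _ => 0) Y' (fun _ => 0) ∧
      redMiu2Cost NI NT f' c' h' F'
        x' (fun _ _ => 0) (fun _ _ => 0) s' x' (fun _ _ => 0)
        y' (fun _ _ => 0) Y' (fun _ => 0) = K' := by
  obtain ⟨hx, hs, hs0, hbal, hy, hY, hxy, hyY⟩ := hfeas
  constructor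
  · refine ⟨?_, ?_, ?_, ?_, ?_, ?_, ?_, ?_⟩
    · intro i t ht
      exact ⟨hx i t ht, le_refl 0, le_refl 0, hs i t ht, hx i t ht, le_refl 0⟩
    · intro i; exact ⟨rfl, hs0 i⟩
    · intro i t ht; ring
    · intro i t ht; have := hbal i t ht; linarith
    · intro i t ht; exact ⟨hy i t ht, Or.inl rfl⟩
    · intro t ht; exact ⟨hY t ht, Or.inl rfl⟩
    · intro i t ht
      exact ⟨hxy i t ht, fun h => absurd h (lt_irrefl 0)⟩
    · intro i t ht
      refine ⟨fun h => ?_, fun h => absurd h (lt_irrefl 0)⟩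
      have h1 := hxy i t ht h
      have h2 := hyY i t ht
      rcases hY t ht with h3 | h3
      · rw [h1] at h2; rw [h3] at h2; linarith
      · exact h3
  · rw [← hcost]
    unfold redMiu2Cost miu2Cost jrpCost
    congr 1
    · apply Finset.sum_congr rfl; intro i _
      apply Finset.sum_congr rfl; intro t _
      ring
    · apply Finset.sum_congr rfl; intro t _
      ring
end
end

section
/- In the MIU2PLS instance constructed from a JRP instance, every feasible solution with cost K < Ω satisfies, for all items i and periods t: y^{i2}_t = 0, x^{i2}_t = 0, Y^{21}_t = 0, and w^{i21}_t = 0; that is, no production occurs at plant 2 and no transfers occur from plant 2 to plant 1. -/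
open Finset

noncomputable section

/-- every feasible solution of the constructed MIU2PLS instance with cost
`K < Ω` has no production at plant 2 and no transfers from plant 2 to plant 1. -/
theorem stmt_7 (NI NT : ℕ)
    (d' f' c' h' : Fin NI → ℕ → ℝ) (F' : ℕ → ℝ)
    (hd' : ∀ i, ∀ t ∈ Icc 1 NT, 0 ≤ d' i t)
    (hf' : ∀ i, ∀ t ∈ Icc 1 NT, 0 ≤ f' i t)
    (hc' : ∀ i, ∀ t ∈ Icc 1 NT, 0 ≤ c' i t)
    (hh' : ∀ i, ∀ t ∈ Icc 1 NT, 0 ≤ h' i t)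
    (hF' : ∀ t ∈ Icc 1 NT, 0 ≤ F' t)
    (x1 x2 s1 s2 w12 w21 y1 y2 : Fin NI → ℕ → ℝ) (Y12 Y21 : ℕ → ℝ) (K : ℝ)
    (hK : K < jrpOmega NI NT f' c' h' F')
    (hfeas : redMiu2Feasible NI NT d' x1 x2 s1 s2 w12 w21 y1 y2 Y12 Y21)
    (hcost : redMiu2Cost NI NT f' c' h' F' x1 x2 s1 s2 w12 w21 y1 y2 Y12 Y21 = K) :
    (∀ i, ∀ t ∈ Icc 1 NT, y2 i t = 0 ∧ x2 i t = 0 ∧ w21 i t = 0) ∧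
      (∀ t ∈ Icc 1 NT, Y21 t = 0) := by
  obtain ⟨hnn, hs0, hb1, hb2, hy, hY, hxy, hwY⟩ := hfeas
  set Ω := jrpOmega NI NT f' c' h' F' with hΩdef
  -- nonnegativity of a double sup of nonneg functions
  have hsup2 : ∀ g : Fin NI → ℕ → ℝ, (∀ i, ∀ t ∈ Icc 1 NT, 0 ≤ g i t) →
      0 ≤ ⨆ i : Fin NI, ⨆ t : (Icc 1 NT : Finset ℕ), g i t := by
    intro g hg
    rcases isEmpty_or_nonempty (Fin NI) with h | h
    · rw [Real.iSup_of_isEmpty]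
    · rcases isEmpty_or_nonempty ((Icc 1 NT : Finset ℕ) : Type) with h2 | h2
      · have : ∀ i : Fin NI, (⨆ t : (Icc 1 NT : Finset ℕ), g i t) = 0 := by
          intro i; rw [Real.iSup_of_isEmpty]
        simp [this]
      · obtain ⟨i⟩ := h
        obtain ⟨t⟩ := h2
        calc (0:ℝ) ≤ g i t := hg i t t.2
          _ ≤ ⨆ t : (Icc 1 NT : Finset ℕ), g i t :=
              le_ciSup (f := fun t : (Icc 1 NT : Finset ℕ) => g i t)
                (Set.Finite.bddAbove (Set.finite_range _)) t
          _ ≤ ⨆ i : Fin NI, ⨆ t : (Icc 1 NT : Finset ℕ), g i t :=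
              le_ciSup (f := fun i : Fin NI => ⨆ t : (Icc 1 NT : Finset ℕ), g i t)
                (Set.Finite.bddAbove (Set.finite_range _)) i
  have hsup1 : 0 ≤ ⨆ t : (Icc 1 NT : Finset ℕ), F' t := by
    rcases isEmpty_or_nonempty ((Icc 1 NT : Finset ℕ) : Type) with h2 | h2
    · rw [Real.iSup_of_isEmpty]
    · obtain ⟨t⟩ := h2
      calc (0:ℝ) ≤ F' t := hF' t t.2
        _ ≤ ⨆ t : (Icc 1 NT : Finset ℕ), F' t :=
            le_ciSup (f := fun t : (Icc 1 NT : Finset ℕ) => F' t)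
              (Set.Finite.bddAbove (Set.finite_range _)) t
  have hΩ0 : 0 ≤ Ω := by
    rw [hΩdef, jrpOmega]
    have h1 := hsup2 f' hf'
    have h2 := hsup2 c' hc'
    have h3 := hsup2 h' hh'
    have : (0:ℝ) ≤ (NT:ℝ) + 1 := by positivity
    nlinarith
  -- nonnegativity of binary variables
  have hy1nn : ∀ i, ∀ t ∈ Icc 1 NT, 0 ≤ y1 i t := by
    intro i t ht; rcases (hy i t ht).1 with h | h <;> rw [h] <;> norm_num
  have hy2nn : ∀ i, ∀ t ∈ Icc 1 NT, 0 ≤ y2 i t := by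
    intro i t ht; rcases (hy i t ht).2 with h | h <;> rw [h] <;> norm_num
  have hY12nn : ∀ t ∈ Icc 1 NT, 0 ≤ Y12 t := by
    intro t ht; rcases (hY t ht).1 with h | h <;> rw [h] <;> norm_num
  have hY21nn : ∀ t ∈ Icc 1 NT, 0 ≤ Y21 t := by
    intro t ht; rcases (hY t ht).2 with h | h <;> rw [h] <;> norm_num
  -- the per-(i,t) cost term
  set term : Fin NI → ℕ → ℝ := fun i t =>
      c' i t * x1 i t + f' i t * y1 i t + Ω * s1 i t + 0 * w12 i t
        + Ω * x2 i t + Ω * y2 i t + h' i t * s2 i t + Ω * w21 i t with hterm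
  have hterm_nn : ∀ i, ∀ t ∈ Icc 1 NT, 0 ≤ term i t := by
    intro i t ht
    obtain ⟨hx1, hx2, hs1, hs2, hw12, hw21⟩ := hnn i t ht
    have := hc' i t ht; have := hf' i t ht; have := hh' i t ht
    have := hy1nn i t ht; have := hy2nn i t ht
    have h1 : 0 ≤ c' i t * x1 i t := by positivity
    have h2 : 0 ≤ f' i t * y1 i t := by positivity
    have h3 : 0 ≤ Ω * s1 i t := by positivity
    have h4 : 0 ≤ Ω * x2 i t := by positivity
    have h5 : 0 ≤ Ω * y2 i t := by positivity
    have h6 : 0 ≤ h' i t * s2 i t := by positivity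
    have h7 : 0 ≤ Ω * w21 i t := by positivity
    rw [hterm]; dsimp only
    nlinarith
  have hFterm_nn : ∀ t ∈ Icc 1 NT, 0 ≤ F' t * Y12 t + Ω * Y21 t := by
    intro t ht
    have := hF' t ht; have := hY12nn t ht; have := hY21nn t ht
    have h1 : 0 ≤ F' t * Y12 t := by positivity
    have h2 : 0 ≤ Ω * Y21 t := by positivity
    linarith
  -- rewrite the cost
  have hcost' : (∑ i, ∑ t ∈ Icc 1 NT, term i t)
      + ∑ t ∈ Icc 1 NT, (F' t * Y12 t + Ω * Y21 t) = K := by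
    rw [← hcost, redMiu2Cost, miu2Cost]
  have hS2nn : 0 ≤ ∑ t ∈ Icc 1 NT, (F' t * Y12 t + Ω * Y21 t) :=
    Finset.sum_nonneg fun t ht => hFterm_nn t ht
  have hS1nn : 0 ≤ ∑ i, ∑ t ∈ Icc 1 NT, term i t :=
    Finset.sum_nonneg fun i _ =>
      Finset.sum_nonneg fun t ht => hterm_nn i t ht
  -- each single term is ≤ K
  have hterm_le : ∀ i, ∀ t ∈ Icc 1 NT, term i t ≤ K := by
    intro i t ht
    have h1 : term i t ≤ ∑ t ∈ Icc 1 NT, term i t :=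
      Finset.single_le_sum (fun t ht => hterm_nn i t ht) ht
    have h2 : (∑ t ∈ Icc 1 NT, term i t) ≤ ∑ i, ∑ t ∈ Icc 1 NT, term i t :=
      Finset.single_le_sum
        (f := fun i => ∑ t ∈ Icc 1 NT, term i t)
        (fun i _ => Finset.sum_nonneg fun t ht => hterm_nn i t ht)
        (Finset.mem_univ i)
    linarith
  have hFterm_le : ∀ t ∈ Icc 1 NT, F' t * Y12 t + Ω * Y21 t ≤ K := by
    intro t ht
    have h1 : F' t * Y12 t + Ω * Y21 t
        ≤ ∑ t ∈ Icc 1 NT, (F' t * Y12 t + Ω * Y21 t) :=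
      Finset.single_le_sum (fun t ht => hFterm_nn t ht) ht
    linarith
  -- conclusions
  have hY21z : ∀ t ∈ Icc 1 NT, Y21 t = 0 := by
    intro t ht
    rcases (hY t ht).2 with h | h
    · exact h
    · exfalso
      have h1 := hFterm_le t ht
      have h2 : 0 ≤ F' t * Y12 t :=
        mul_nonneg (hF' t ht) (hY12nn t ht)
      rw [h] at h1
      linarith
  have hy2z : ∀ i, ∀ t ∈ Icc 1 NT, y2 i t = 0 := by
    intro i t ht
    rcases (hy i t ht).2 with h | h
    · exact h
    · exfalso
      obtain ⟨hx1, hx2, hs1, hs2, hw12, hw21⟩ := hnn i t ht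
      have h1 := hterm_le i t ht
      rw [hterm] at h1; dsimp only at h1
      rw [h] at h1
      have hc := mul_nonneg (hc' i t ht) hx1
      have hf := mul_nonneg (hf' i t ht) (hy1nn i t ht)
      have hhs := mul_nonneg (hh' i t ht) hs2
      have hΩs : 0 ≤ Ω * s1 i t := mul_nonneg hΩ0 hs1
      have hΩx : 0 ≤ Ω * x2 i t := mul_nonneg hΩ0 hx2
      have hΩw : 0 ≤ Ω * w21 i t := mul_nonneg hΩ0 hw21
      linarith
  refine ⟨fun i t ht => ⟨hy2z i t ht, ?_, ?_⟩, hY21z⟩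
  · by_contra hne
    have hx2pos : 0 < x2 i t := lt_of_le_of_ne (hnn i t ht).2.1 (Ne.symm hne)
    have := (hxy i t ht).2 hx2pos
    rw [hy2z i t ht] at this; norm_num at this
  · by_contra hne
    have hwpos : 0 < w21 i t :=
      lt_of_le_of_ne (hnn i t ht).2.2.2.2.2 (Ne.symm hne)
    have := (hwY i t ht).2 hwpos
    rw [hY21z t ht] at this; norm_num at this
end
end
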